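/- arXiv:math-ph/0605027 — 3 statements merged into one kernel-verified Lean document; each statement's English description precedes it below -/
import Mathlib

section
/- The symplectic form Q₂ is exact with primitive θ₂ = ∫ i(dz∧dz̄) Tr(φ_z̄ δA_z + φ_z δA_z̄): in the coefficient model, define θ₂ : V → (V →L[ℝ] ℝ) by θ₂(A,Φ)(b,d) = 4·Re(trace(Φ·b)), where (A,Φ) ∈ V is the base point and (b,d) ∈ V a tangent vector. Then θ₂ is differentiable at every point and for all x, u = (a,c), v = (b,d) ∈ V, ((fderiv ℝ θ₂ x) u) v − ((fderiv ℝ θ₂ x) v) u = 4·ω_K(u,v) = 4(Re(trace(c·b)) − Re(trace(a·d))). That is, the exterior derivative of the 1-form θ₂ equals the 2-form whose density is Q₂. -/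
open Matrix

noncomputable section

attribute [local instance] Matrix.normedAddCommGroup Matrix.normedSpace

/-- The coefficient model of the tangent space to Hitchin's configuration space:
pairs of complex `n × n` matrices. -/
abbrev HitchinV (n : ℕ) := Matrix (Fin n) (Fin n) ℂ × Matrix (Fin n) (Fin n) ℂ

/-- Hitchin's third almost complex structure `K(a,c) = (−cᴴ, aᴴ)`. -/
def Kmap {n : ℕ} (x : HitchinV n) : HitchinV n :=
  (-(x.2ᴴ), x.1ᴴ)

/-- The pointwise density of Hitchin's metric. -/
def hform {n : ℕ} (x y : HitchinV n) : ℝ :=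
  (Matrix.trace (x.1 * y.1ᴴ)).re + (Matrix.trace (x.2 * y.2ᴴ)).re

/-- The pointwise density of the symplectic form `Q₂`. -/
def omegaK {n : ℕ} (x y : HitchinV n) : ℝ := hform x (Kmap y)

/-- The coefficient model of the 1-form
`θ₂ = ∫ i(dz∧dz̄) Tr(φ_z̄ δA_z + φ_z δA_z̄)`: `θ₂(A,Φ)(b,d) = 4·Re(trace(Φ·b))`. -/
def theta2 {n : ℕ} (x : HitchinV n) : HitchinV n →L[ℝ] ℝ :=
  LinearMap.toContinuousLinearMap
    { toFun := fun v => (4 : ℝ) * (Matrix.trace (x.2 * v.1)).re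
      map_add' := by
        intro u v
        simp [Matrix.mul_add]
        ring
      map_smul' := by
        intro r v
        simp [Matrix.mul_smul]
        ring }

@[simp] lemma theta2_apply {n : ℕ} (x v : HitchinV n) :
    theta2 x v = (4 : ℝ) * (Matrix.trace (x.2 * v.1)).re := rfl

/-- `theta2` as a continuous linear map in the base point. -/
def theta2CLM (n : ℕ) : HitchinV n →L[ℝ] (HitchinV n →L[ℝ] ℝ) :=
  LinearMap.toContinuousLinearMap
    { toFun := theta2
      map_add' := by
        intro x y
        refine ContinuousLinearMap.ext fun v => ?_
        simp [Matrix.add_mul]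
        ring
      map_smul' := by
        intro r x
        refine ContinuousLinearMap.ext fun v => ?_
        simp [Matrix.smul_mul]
        ring }

lemma theta2_eq_clm (n : ℕ) : theta2 (n := n) = theta2CLM n := rfl

lemma fderiv_theta2 (n : ℕ) (x : HitchinV n) :
    fderiv ℝ (theta2 (n := n)) x = theta2CLM n := by
  rw [theta2_eq_clm]
  exact (theta2CLM n).fderiv

/-- The symplectic form `Q₂` is exact with primitive `θ₂`: the 1-form `θ₂` is
differentiable and its exterior derivative is the 2-form with density `4·ω_K`. -/
theorem hitchin_Q2_exact (n : ℕ) (hn : 1 ≤ n) :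
    (∀ x : HitchinV n, DifferentiableAt ℝ (theta2 (n := n)) x) ∧
    (∀ x u v : HitchinV n,
      fderiv ℝ (theta2 (n := n)) x u v - fderiv ℝ (theta2 (n := n)) x v u =
        4 * omegaK u v ∧
      fderiv ℝ (theta2 (n := n)) x u v - fderiv ℝ (theta2 (n := n)) x v u =
        4 * ((Matrix.trace (u.2 * v.1)).re - (Matrix.trace (u.1 * v.2)).re)) := by
  constructor
  · intro x
    rw [theta2_eq_clm]
    exact (theta2CLM n).differentiableAt
  · intro x u v
    have key : fderiv ℝ (theta2 (n := n)) x u v - fderiv ℝ (theta2 (n := n)) x v u =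
        4 * ((Matrix.trace (u.2 * v.1)).re - (Matrix.trace (u.1 * v.2)).re) := by
      rw [fderiv_theta2]
      show (4 : ℝ) * (Matrix.trace (u.2 * v.1)).re -
          (4 : ℝ) * (Matrix.trace (v.2 * u.1)).re = _
      rw [Matrix.trace_mul_comm v.2 u.1]
      ring
    refine ⟨?_, key⟩
    rw [key]
    simp only [omegaK, hform, Kmap, conjTranspose_neg, conjTranspose_conjTranspose,
      Matrix.mul_neg, Matrix.trace_neg, Complex.neg_re]
    ring
end
end

section
/- At λ = i the curvature density of the Chern–Simons cocycle line bundle combines the first and second symplectic forms: for all complex n×n matrices a, b, c, d, trace((i·c − aᴴ)·(b − i·dᴴ) − (a − i·cᴴ)·(i·d − bᴴ)) = 2i·ω_I((a,c),(b,d)) + 2·ω_J((a,c),(b,d)), where ω_I((a,c),(b,d)) = Im(trace(a·bᴴ)) + Im(trace(c·dᴴ)) and ω_J((a,c),(b,d)) = Im(trace(a·d)) − Im(trace(c·b)). This is the pointwise form of the statement that F_λ at λ = i is proportional to Ω − i Q₁. -/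
open Matrix

noncomputable section

/-- Hitchin's first almost complex structure `I(a,c) = (i·a, i·c)`. -/
def Imap {n : ℕ} (x : HitchinV n) : HitchinV n :=
  (Complex.I • x.1, Complex.I • x.2)

/-- Hitchin's second almost complex structure `J(a,c) = (i·cᴴ, −i·aᴴ)`. -/
def Jmap {n : ℕ} (x : HitchinV n) : HitchinV n :=
  (Complex.I • x.2ᴴ, -(Complex.I • x.1ᴴ))

/-- The pointwise density of the symplectic form `Ω`. -/
def omegaI {n : ℕ} (x y : HitchinV n) : ℝ := hform x (Imap y)

/-- The pointwise density of the symplectic form `Q₁`. -/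
def omegaJ {n : ℕ} (x y : HitchinV n) : ℝ := hform x (Jmap y)

/-- At `λ = i` the curvature density of the Chern–Simons cocycle line bundle
combines the first and second symplectic forms: it equals `2i·ω_I + 2·ω_J`. -/
theorem chernSimons_curvature_at_i (n : ℕ) (hn : 1 ≤ n) :
    ∀ a b c d : Matrix (Fin n) (Fin n) ℂ,
      Matrix.trace ((Complex.I • c - aᴴ) * (b - Complex.I • dᴴ) -
          (a - Complex.I • cᴴ) * (Complex.I • d - bᴴ)) =
        2 * Complex.I *
            (((Matrix.trace (a * bᴴ)).im + (Matrix.trace (c * dᴴ)).im : ℝ) : ℂ) +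
          2 * (((Matrix.trace (a * d)).im - (Matrix.trace (c * b)).im : ℝ) : ℂ) := by

  intro a b c d
  have key : ∀ z1 z2 w1 w2 : ℂ,
      Complex.I * w2 + z2 - (starRingEnd ℂ) z1 + Complex.I * (starRingEnd ℂ) w1
        - Complex.I * w1 + z1 - (starRingEnd ℂ) z2 - Complex.I * (starRingEnd ℂ) w2 =
      2 * Complex.I * ((z1.im + z2.im : ℝ) : ℂ) + 2 * ((w1.im - w2.im : ℝ) : ℂ) := by
    intro z1 z2 w1 w2
    apply Complex.ext <;>
      simp [Complex.add_re, Complex.add_im, Complex.sub_re, Complex.sub_im,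
        Complex.mul_re, Complex.mul_im, Complex.conj_re, Complex.conj_im] <;> ring
  have hstar : ∀ X Y : Matrix (Fin n) (Fin n) ℂ,
      Matrix.trace (Xᴴ * Yᴴ) = (starRingEnd ℂ) (Matrix.trace (X * Y)) := by
    intro X Y
    rw [← Matrix.conjTranspose_mul, Matrix.trace_conjTranspose, Matrix.trace_mul_comm]
    rfl
  have h1 : Matrix.trace (aᴴ * b) = (starRingEnd ℂ) (Matrix.trace (a * bᴴ)) := by
    have := hstar a bᴴ
    rwa [Matrix.conjTranspose_conjTranspose] at this
  have h2 : Matrix.trace (cᴴ * d) = (starRingEnd ℂ) (Matrix.trace (c * dᴴ)) := by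
    have := hstar c dᴴ
    rwa [Matrix.conjTranspose_conjTranspose] at this
  have h3 : Matrix.trace (aᴴ * dᴴ) = (starRingEnd ℂ) (Matrix.trace (a * d)) := hstar a d
  have h4 : Matrix.trace (cᴴ * bᴴ) = (starRingEnd ℂ) (Matrix.trace (c * b)) := hstar c b
  calc Matrix.trace ((Complex.I • c - aᴴ) * (b - Complex.I • dᴴ) -
          (a - Complex.I • cᴴ) * (Complex.I • d - bᴴ))
      = Complex.I * Matrix.trace (c * b) + Matrix.trace (c * dᴴ)
        - Matrix.trace (aᴴ * b) + Complex.I * Matrix.trace (aᴴ * dᴴ)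
        - Complex.I * Matrix.trace (a * d) + Matrix.trace (a * bᴴ)
        - Matrix.trace (cᴴ * d) - Complex.I * Matrix.trace (cᴴ * bᴴ) := by
        simp only [Matrix.sub_mul, Matrix.mul_sub, Matrix.trace_sub, Matrix.trace_add,
          Matrix.smul_mul, Matrix.mul_smul, Matrix.trace_smul, smul_smul, smul_eq_mul,
          Complex.I_mul_I]
        linear_combination (Matrix.trace (cᴴ * d) - Matrix.trace (c * dᴴ)) * Complex.I_sq
    _ = _ := by
        rw [h1, h2, h3, h4]
        have := key (Matrix.trace (a * bᴴ)) (Matrix.trace (c * dᴴ))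
          (Matrix.trace (a * d)) (Matrix.trace (c * b))
        linear_combination this
end
end

section
/- At λ = 1 the curvature density of the Chern–Simons cocycle line bundle combines the first and third symplectic forms: for all complex n×n matrices a, b, c, d, trace((c − aᴴ)·(b + dᴴ) − (a + cᴴ)·(d − bᴴ)) = 2i·ω_I((a,c),(b,d)) + 2·ω_K((a,c),(b,d)), where ω_I((a,c),(b,d)) = Im(trace(a·bᴴ)) + Im(trace(c·dᴴ)) and ω_K((a,c),(b,d)) = Re(trace(c·b)) − Re(trace(a·d)). This is the pointwise form of the statement that F_λ at λ = 1 is proportional to Ω − i Q₂. -/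
open Matrix

noncomputable section

/-- At `λ = 1` the curvature density of the Chern–Simons cocycle line bundle
combines the first and third symplectic forms: it equals `2i·ω_I + 2·ω_K`. -/
theorem chernSimons_curvature_at_one (n : ℕ) (hn : 1 ≤ n) :
    ∀ a b c d : Matrix (Fin n) (Fin n) ℂ,
      Matrix.trace ((c - aᴴ) * (b + dᴴ) - (a + cᴴ) * (d - bᴴ)) =
        2 * Complex.I *
            (((Matrix.trace (a * bᴴ)).im + (Matrix.trace (c * dᴴ)).im : ℝ) : ℂ) +
          2 * (((Matrix.trace (c * b)).re - (Matrix.trace (a * d)).re : ℝ) : ℂ) := by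
  intro a b c d
  have key : ∀ X Y : Matrix (Fin n) (Fin n) ℂ,
      Matrix.trace (Xᴴ * Yᴴ) = star (Matrix.trace (Y * X)) := by
    intro X Y
    rw [← Matrix.conjTranspose_mul, Matrix.trace_conjTranspose]
  have h1 : Matrix.trace ((c - aᴴ) * (b + dᴴ) - (a + cᴴ) * (d - bᴴ)) =
      Matrix.trace (c * b) + Matrix.trace (c * dᴴ)
        - star (Matrix.trace (a * bᴴ)) - star (Matrix.trace (a * d))
        - Matrix.trace (a * d) + Matrix.trace (a * bᴴ)
        - star (Matrix.trace (c * dᴴ)) + star (Matrix.trace (c * b)) := by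
    have e1 : Matrix.trace (aᴴ * b) = star (Matrix.trace (a * bᴴ)) := by
      rw [← key, Matrix.trace_mul_comm]; simp
    have e2 : Matrix.trace (aᴴ * dᴴ) = star (Matrix.trace (a * d)) := by
      rw [key, Matrix.trace_mul_comm]
    have e3 : Matrix.trace (cᴴ * d) = star (Matrix.trace (c * dᴴ)) := by
      rw [← key, Matrix.trace_mul_comm]; simp
    have e4 : Matrix.trace (cᴴ * bᴴ) = star (Matrix.trace (c * b)) := by
      rw [key, Matrix.trace_mul_comm]
    simp only [mul_add, add_mul, sub_mul, mul_sub, Matrix.trace_sub, Matrix.trace_add,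
      e1, e2, e3, e4]
    ring
  rw [h1]
  set p := Matrix.trace (a * bᴴ)
  set q := Matrix.trace (c * dᴴ)
  set r := Matrix.trace (c * b)
  set s := Matrix.trace (a * d)
  apply Complex.ext <;>
    simp [Complex.ext_iff, Complex.add_re, Complex.add_im, Complex.sub_re, Complex.sub_im,
      Complex.mul_re, Complex.mul_im, Complex.conj_re, Complex.conj_im] <;> ring
end
end
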